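/- The multiset S = {2, 2, 2, 3, 5, 5, 5} is 2-projection-forcing, is realized by an F_2-linear projection (for instance, the projection onto the last coordinate of the code in F_2^7 spanned by {(1,1,0,0,0,0,0), (1,0,1,0,0,0,0), (0,0,0,1,1,1,0)} realizes S), and yet its split difference satisfies δ_2(S) = −6 ≤ −2^{3−1}; hence the sufficient condition δ_2(S) > −2^{k−1} of the split-difference criterion is not necessary for being 2-projection-forcing. -/

import Mathlib

open Matrix

noncomputable section

instance instFiniteProjectivization (K V : Type*) [DivisionRing K] [AddCommGroup V] [Module K V]
    [Finite V] : Finite (Projectivization K V) :=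
  Quotient.finite _

noncomputable instance instFintypeProjectivization (K V : Type*) [DivisionRing K] [AddCommGroup V]
    [Module K V] [Finite V] : Fintype (Projectivization K V) :=
  Fintype.ofFinite _

noncomputable instance instDecEqProjectivization (K V : Type*) [DivisionRing K] [AddCommGroup V]
    [Module K V] : DecidableEq (Projectivization K V) :=
  Classical.decEq _

/-- The projective multiset of weight changes of a linear map between linear codes
`U ⊆ F^n` and `V ⊆ F^m`: the multiset `{w(u) - w(φ(u)) : u ∈ P(U)}`. -/
def projWeightChanges {F : Type} [Field F] [Fintype F] [DecidableEq F] {n m : ℕ}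
    {U : Submodule F (Fin n → F)} {V : Submodule F (Fin m → F)} (φ : U →ₗ[F] V) : Multiset ℤ :=
  (Finset.univ : Finset (Projectivization F U)).val.map
    fun p => (hammingNorm (p.rep : Fin n → F) : ℤ) - (hammingNorm ((φ p.rep : V) : Fin m → F) : ℤ)

/-- S is realized by some F-linear map between linear codes. -/
def Realizes (F : Type) [Field F] [Fintype F] [DecidableEq F] (S : Multiset ℤ) : Prop :=
  ∃ (n m : ℕ) (U : Submodule F (Fin n → F)) (V : Submodule F (Fin m → F)) (φ : U →ₗ[F] V),
    projWeightChanges φ = S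

/-- A coordinate projection up to monomial equivalence: multiplication by a matrix
with at most one nonzero entry in each row and each column. -/
def IsProjection {F : Type} [Field F] [Fintype F] [DecidableEq F] {n m : ℕ}
    {U : Submodule F (Fin n → F)} {V : Submodule F (Fin m → F)} (φ : U →ₗ[F] V) : Prop :=
  ∃ M : Matrix (Fin m) (Fin n) F,
    (∀ u : U, ((φ u : Fin m → F)) = M.mulVec (u : Fin n → F)) ∧
    (∀ i j j', M i j ≠ 0 → M i j' ≠ 0 → j = j') ∧
    (∀ i i' j, M i j ≠ 0 → M i' j ≠ 0 → i = i')

/-- A monomial equivalence: multiplication by an n × n matrix with exactly one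
nonzero entry in each row and each column. -/
def IsMonomialEquiv {F : Type} [Field F] [Fintype F] [DecidableEq F] {n : ℕ}
    {U V : Submodule F (Fin n → F)} (φ : U →ₗ[F] V) : Prop :=
  ∃ M : Matrix (Fin n) (Fin n) F,
    (∀ u : U, ((φ u : Fin n → F)) = M.mulVec (u : Fin n → F)) ∧
    (∀ i, ∃! j, M i j ≠ 0) ∧
    (∀ j, ∃! i, M i j ≠ 0)

/-- S is q-projection-forcing: every linear map over a field of order q realizing S
is a projection. -/
def ProjectionForcing (q : ℕ) (S : Multiset ℤ) : Prop :=
  ∀ (F : Type) [Field F] [Fintype F] [DecidableEq F], Fintype.card F = q →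
    ∀ (n m : ℕ) (U : Submodule F (Fin n → F)) (V : Submodule F (Fin m → F))
      (φ : U →ₗ[F] V), projWeightChanges φ = S → IsProjection φ

/-- The matrix M_{k,q}: rows and columns indexed by points of PG(k-1,q), with (v,w)
entry 0 if v ⬝ w = 0 and 1 otherwise. -/
def Mkq (F : Type) [Field F] [Fintype F] [DecidableEq F] (k : ℕ) :
    Matrix (Projectivization F (Fin k → F)) (Projectivization F (Fin k → F)) ℝ :=
  Matrix.of fun v w => if dotProduct v.rep w.rep = 0 then (0 : ℝ) else 1

/-- The q-ary split difference of a multiset S. -/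
def splitDiff (q k : ℕ) (S : Multiset ℤ) : ℤ :=
  (((S.sort (· ≤ ·)).take (q ^ (k - 1))).sum) -
    ((q : ℤ) - 1) * (((S.sort (· ≤ ·)).drop (q ^ (k - 1))).sum)

end

/-- The code in `F₂⁷` spanned by `{(1,1,0,0,0,0,0), (1,0,1,0,0,0,0), (0,0,0,1,1,1,0)}`. -/
def V₃ : Submodule (ZMod 2) (Fin 7 → ZMod 2) :=
  Submodule.span (ZMod 2) {![1,1,0,0,0,0,0], ![1,0,1,0,0,0,0], ![0,0,0,1,1,1,0]}

/-!
Over `F₂` the points of `P(U)` are the nonzero codewords, so a map realizing `S` has a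
three-dimensional domain. Regard each code as the family of its coordinate functionals in `U*`:
summing weights over all of `U`, or over a hyperplane `ker g`, only sees how many coordinates are
nonzero and how many equal `g`. Comparing these sums for `U` and for `φ(U)` shows that the three
nonzero vectors of `ker g` carry total weight change `12 - 2 (a_g - b_g)`, where `a_g` and `b_g`
count the coordinates of `U` and of `φ` equal to `g`. Three values from `{2, 3, 5}` with even sum
add up to at most `12`, so `b_g ≤ a_g` for every `g ≠ 0`, and matching the output coordinates
injectively with input coordinates carrying the same functional exhibits `φ` as a projection.
-/

open Finset Function

theorem Projectivization.rep_injective {K W : Type*} [DivisionRing K] [AddCommGroup W]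
    [Module K W] : Injective (Projectivization.rep : Projectivization K W → W) :=
  fun _ _ h => Quotient.out_injective (Subtype.ext h)

section FieldOfCardTwo

variable {F : Type*} [Field F] [Fintype F]

theorem Units.val_eq_one_of_card_eq_two (hF : Fintype.card F = 2) (a : Fˣ) : (a : F) = 1 := by
  classical
  have : Subsingleton Fˣ :=
    Fintype.card_le_one_iff_subsingleton.mp (by rw [Fintype.card_units, hF])
  exact congrArg Units.val (Subsingleton.elim a 1)

theorem eq_one_of_ne_zero_of_card_eq_two (hF : Fintype.card F = 2) {x : F} (hx : x ≠ 0) :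
    x = 1 :=
  Units.val_eq_one_of_card_eq_two hF (Units.mk0 x hx)

variable {W : Type*} [AddCommGroup W] [Module F W]

theorem Projectivization.rep_mk_of_card_eq_two (hF : Fintype.card F = 2) {v : W} (hv : v ≠ 0) :
    (mk F v hv).rep = v := by
  obtain ⟨a, ha⟩ := (mk_eq_mk_iff F _ _ (rep_nonzero _) hv).mp (mk_rep (mk F v hv))
  rw [← ha, Units.smul_def, Units.val_eq_one_of_card_eq_two hF, one_smul]

theorem Projectivization.map_rep_univ_of_card_eq_two (hF : Fintype.card F = 2) [Fintype W]
    [DecidableEq W] :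
    (univ : Finset (Projectivization F W)).map ⟨Projectivization.rep, rep_injective⟩ =
      univ.erase 0 := by
  ext u
  simp only [mem_map, mem_univ, true_and, Embedding.coeFn_mk, mem_erase, and_true]
  exact ⟨fun ⟨p, hp⟩ => hp ▸ p.rep_nonzero, fun hu => ⟨mk F u hu, rep_mk_of_card_eq_two hF hu⟩⟩

end FieldOfCardTwo

section Counting

variable {F : Type*} [Field F] [Fintype F] (hF : Fintype.card F = 2)
  {W : Type*} [AddCommGroup W] [Module F W] [Fintype W] [DecidableEq F]
include hF

theorem card_filter_mem_apply_eq_zero (K : Submodule F W) [DecidablePred (· ∈ K)]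
    {G : Module.Dual F W} {u₀ : W} (hu₀K : u₀ ∈ K) (hu₀ : G u₀ ≠ 0) :
    #{u | u ∈ K ∧ G u = 0} = #{u | u ∈ K ∧ G u ≠ 0} := by
  refine card_nbij' (· + u₀) (· - u₀) ?_ ?_ (fun u _ => add_sub_cancel_right u u₀)
    (fun u _ => sub_add_cancel u u₀)
  · intro u hu
    simp only [coe_filter, mem_univ, true_and, Set.mem_ofPred_eq] at hu ⊢
    rw [map_add, hu.2, zero_add]
    exact ⟨K.add_mem hu.1 hu₀K, hu₀⟩
  · intro u hu
    simp only [coe_filter, mem_univ, true_and, Set.mem_ofPred_eq] at hu ⊢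
    rw [map_sub, eq_one_of_ne_zero_of_card_eq_two hF hu.2,
      eq_one_of_ne_zero_of_card_eq_two hF hu₀, sub_self]
    exact ⟨K.sub_mem hu.1 hu₀K, rfl⟩

theorem two_mul_card_filter_mem_apply_ne_zero (K : Submodule F W) [DecidablePred (· ∈ K)]
    {G : Module.Dual F W} {u₀ : W} (hu₀K : u₀ ∈ K) (hu₀ : G u₀ ≠ 0) :
    2 * #{u | u ∈ K ∧ G u ≠ 0} = #{u | u ∈ K} := by
  rw [← card_filter_add_card_filter_not (s := {u | u ∈ K}) (fun u => G u = 0), filter_filter,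
    filter_filter, card_filter_mem_apply_eq_zero hF K hu₀K hu₀, two_mul]

theorem two_mul_card_filter_apply_ne_zero {G : Module.Dual F W} (hG : G ≠ 0) :
    2 * #{u | G u ≠ 0} = Fintype.card W := by
  classical
  obtain ⟨u₀, hu₀⟩ := DFunLike.ne_iff.mp hG
  simpa using two_mul_card_filter_mem_apply_ne_zero hF ⊤ Submodule.mem_top hu₀

theorem two_mul_card_filter_apply_eq_zero {g : Module.Dual F W} (hg : g ≠ 0) :
    2 * #{u | g u = 0} = Fintype.card W := by
  classical
  obtain ⟨u₀, hu₀⟩ := DFunLike.ne_iff.mp hg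
  have := card_filter_mem_apply_eq_zero hF ⊤ Submodule.mem_top hu₀
  simp only [Submodule.mem_top, true_and] at this
  rw [this, two_mul_card_filter_apply_ne_zero hF hg]

theorem exists_apply_eq_zero_apply_ne_zero {g G : Module.Dual F W} (hG : G ≠ 0) (hGg : G ≠ g) :
    ∃ u, g u = 0 ∧ G u ≠ 0 := by
  by_contra! h
  obtain ⟨a, rfl⟩ := Submodule.mem_span_singleton.mp <| by
    simpa using mem_span_of_iInf_ker_le_ker (L := fun _ : Unit => g) (K := G)
      (by simpa [SetLike.le_def] using h)
  rcases eq_or_ne a 0 with rfl | ha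
  · exact hG (zero_smul F g)
  · exact hGg (by rw [eq_one_of_ne_zero_of_card_eq_two hF ha, one_smul])

theorem four_mul_card_filter_apply_eq_zero_apply_ne_zero {g G : Module.Dual F W} (hg : g ≠ 0)
    (hG : G ≠ 0) (hGg : G ≠ g) :
    4 * #{u | g u = 0 ∧ G u ≠ 0} = Fintype.card W := by
  classical
  obtain ⟨u₀, hu₀g, hu₀G⟩ := exists_apply_eq_zero_apply_ne_zero hF hG hGg
  have := two_mul_card_filter_mem_apply_ne_zero hF (LinearMap.ker g) hu₀g hu₀G
  simp only [LinearMap.mem_ker] at this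
  rw [← two_mul_card_filter_apply_eq_zero hF hg, ← this]
  ring

end Counting

theorem mul_sum_card_filter_eq {α ι : Type*} [Fintype ι] (s : Finset α) (r : ι → α → Prop)
    [∀ j a, Decidable (r j a)] (P : ι → Prop) [DecidablePred P] {k N : ℕ}
    (h : ∀ j, k * #{a ∈ s | r j a} = if P j then N else 0) :
    k * ∑ a ∈ s, #{j | r j a} = #{j | P j} * N := by
  have : ∑ a ∈ s, #{j | r j a} = ∑ j, #{a ∈ s | r j a} :=
    sum_card_bipartiteAbove_eq_sum_card_bipartiteBelow (fun a j => r j a)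
  rw [this, mul_sum]
  simp only [h, ← sum_filter, sum_const, smul_eq_mul]

section WeightSums

variable {F : Type*} [Field F] [Fintype F] (hF : Fintype.card F = 2)
  {W : Type*} [AddCommGroup W] [Module F W] [Fintype W] [DecidableEq F]
  [DecidableEq (Module.Dual F W)] {ι : Type*} [Fintype ι] (G : ι → Module.Dual F W)
include hF

theorem two_mul_sum_card_apply_ne_zero :
    2 * ∑ u, #{j | G j u ≠ 0} = #{j | G j ≠ 0} * Fintype.card W := by
  refine mul_sum_card_filter_eq _ _ _ fun j => ?_
  split_ifs with hG
  · exact two_mul_card_filter_apply_ne_zero hF hG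
  · simp [not_not.mp hG]

theorem four_mul_sum_ker_card_apply_ne_zero {g : Module.Dual F W} (hg : g ≠ 0) :
    4 * ∑ u with g u = 0, #{j | G j u ≠ 0} = #{j | G j ≠ 0 ∧ G j ≠ g} * Fintype.card W := by
  refine mul_sum_card_filter_eq _ _ _ fun j => ?_
  rw [filter_filter]
  split_ifs with hG
  · exact four_mul_card_filter_apply_eq_zero_apply_ne_zero hF hg hG.1 hG.2
  · obtain hG | hG := not_and_or.mp hG <;> simp_all

end WeightSums

theorem card_filter_ne_zero_and_ne_add_card_filter_eq {ι M : Type*} [Fintype ι] [Zero M]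
    [DecidableEq M] (G : ι → M) {g : M} (hg : g ≠ 0) :
    #{j | G j ≠ 0 ∧ G j ≠ g} + #{j | G j = g} = #{j | G j ≠ 0} := by
  rw [← card_filter_add_card_filter_not (s := {j | G j ≠ 0}) (fun j => G j ≠ g), filter_filter,
    filter_filter]
  congr 2
  exact filter_congr fun j _ => ⟨fun h => ⟨h ▸ hg, not_not.mpr h⟩, fun h => not_not.mp h.2⟩

def coordFun {F : Type*} [Field F] {n : ℕ} (U : Submodule F (Fin n → F)) (j : Fin n) :
    Module.Dual F U :=
  LinearMap.proj j ∘ₗ U.subtype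

theorem sum_le_twelve_of_even {α : Type*} {s : Finset α} {f : α → ℤ} (hs : #s = 3)
    (hf : ∀ a ∈ s, f a = 2 ∨ f a = 3 ∨ f a = 5) (he : Even (∑ a ∈ s, f a)) :
    ∑ a ∈ s, f a ≤ 12 := by
  classical
  obtain ⟨x, y, z, hxy, hxz, hyz, rfl⟩ := card_eq_three.mp hs
  rw [sum_insert (by simp [hxy, hxz]), sum_pair hyz] at he ⊢
  obtain ⟨k, hk⟩ := he
  rcases hf x (by simp) with h | h | h <;> rcases hf y (by simp) with h' | h' | h' <;>
    rcases hf z (by simp) with h'' | h'' | h'' <;> omega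

section Codes

variable {F : Type} [Field F] [DecidableEq F] {n m : ℕ}
  {U : Submodule F (Fin n → F)} {V : Submodule F (Fin m → F)}

def weightChange (φ : U →ₗ[F] V) (u : U) : ℤ :=
  hammingNorm (u : Fin n → F) - hammingNorm ((φ u : V) : Fin m → F)

theorem weightChange_eq_card_sub_card (φ : U →ₗ[F] V) (u : U) :
    weightChange φ u = (#{j | coordFun U j u ≠ 0} : ℤ) - #{i | (coordFun V i ∘ₗ φ) u ≠ 0} :=
  rfl

@[simp]
theorem weightChange_zero (φ : U →ₗ[F] V) : weightChange φ 0 = 0 := by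
  simp [weightChange]

variable [Fintype F]

theorem projWeightChanges_eq_map_weightChange (hF : Fintype.card F = 2) [Fintype U]
    [DecidableEq U] (φ : U →ₗ[F] V) :
    projWeightChanges φ = ((univ : Finset U).erase 0).val.map (weightChange φ) := by
  rw [← Projectivization.map_rep_univ_of_card_eq_two hF, map_val, Multiset.map_map,
    projWeightChanges]
  congr 2

variable (hF : Fintype.card F = 2) (φ : U →ₗ[F] V) [DecidableEq (Module.Dual F U)]
include hF

theorem two_mul_sum_weightChange [Fintype U] :
    2 * ∑ u, weightChange φ u = ((#{j | coordFun U j ≠ 0} : ℤ) -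
      #{i | coordFun V i ∘ₗ φ ≠ 0}) * Fintype.card U := by
  have hU := congrArg (Nat.cast : ℕ → ℤ) (two_mul_sum_card_apply_ne_zero hF (coordFun U))
  have hV := congrArg (Nat.cast : ℕ → ℤ)
    (two_mul_sum_card_apply_ne_zero hF (coordFun V · ∘ₗ φ))
  simp only [Nat.cast_mul, Nat.cast_sum, Nat.cast_ofNat] at hU hV
  simp only [weightChange_eq_card_sub_card, sum_sub_distrib]
  linear_combination hU - hV

theorem four_mul_sum_ker_weightChange [Fintype U] {g : Module.Dual F U} (hg : g ≠ 0) :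
    4 * ∑ u with g u = 0, weightChange φ u =
      ((#{j | coordFun U j ≠ 0} - #{j | coordFun U j = g} : ℤ) -
        (#{i | coordFun V i ∘ₗ φ ≠ 0} - #{i | coordFun V i ∘ₗ φ = g})) * Fintype.card U := by
  have hU := congrArg (Nat.cast : ℕ → ℤ) (four_mul_sum_ker_card_apply_ne_zero hF (coordFun U) hg)
  have hV := congrArg (Nat.cast : ℕ → ℤ)
    (four_mul_sum_ker_card_apply_ne_zero hF (coordFun V · ∘ₗ φ) hg)
  have sU := congrArg (Nat.cast : ℕ → ℤ)
    (card_filter_ne_zero_and_ne_add_card_filter_eq (coordFun U) hg)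
  have sV := congrArg (Nat.cast : ℕ → ℤ)
    (card_filter_ne_zero_and_ne_add_card_filter_eq (coordFun V · ∘ₗ φ) hg)
  simp only [Nat.cast_mul, Nat.cast_sum, Nat.cast_ofNat, Nat.cast_add] at hU hV sU sV
  simp only [weightChange_eq_card_sub_card, sum_sub_distrib]
  rw [← sU, ← sV]
  linear_combination hU - hV

theorem card_coordFun_comp_eq_le_of_projWeightChanges_eq
    (hφ : projWeightChanges φ = ({2,2,2,3,5,5,5} : Multiset ℤ))
    {g : Module.Dual F U} (hg : g ≠ 0) :
    #{i | coordFun V i ∘ₗ φ = g} ≤ #{j | coordFun U j = g} := by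
  classical
  let _ : Fintype U := Fintype.ofFinite U
  rw [projWeightChanges_eq_map_weightChange hF] at hφ
  have hcard : Fintype.card U = 8 := by
    have h7 := congrArg Multiset.card hφ
    simp only [Multiset.card_map, card_val, card_erase_of_mem (mem_univ _), card_univ,
      Multiset.insert_eq_cons, Multiset.card_cons, Multiset.card_singleton] at h7
    have := Fintype.card_pos (α := U)
    omega
  have hvals : ∀ u ≠ 0, weightChange φ u = 2 ∨ weightChange φ u = 3 ∨ weightChange φ u = 5 := by
    intro u hu
    have := hφ ▸ Multiset.mem_map_of_mem (weightChange φ) (mem_erase.mpr ⟨hu, mem_univ u⟩)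
    simpa using this
  have htotal : ∑ u, weightChange φ u = 24 := by
    rw [← sum_erase _ (weightChange_zero φ)]
    exact congrArg Multiset.sum hφ
  have h1 := two_mul_sum_weightChange hF φ
  have h2 := four_mul_sum_ker_weightChange hF φ hg
  rw [hcard] at h1 h2
  push_cast at h1 h2
  have hker : ∑ u with g u = 0, weightChange φ u ≤ 12 := by
    rw [← sum_erase _ (weightChange_zero φ)]
    refine sum_le_twelve_of_even ?_ (fun u hu => hvals u (ne_of_mem_erase hu)) ?_
    · have := two_mul_card_filter_apply_eq_zero hF hg
      rw [card_erase_of_mem (by simp)]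
      omega
    · rw [sum_erase _ (weightChange_zero φ), Int.even_iff]
      omega
  linarith

end Codes

theorem exists_injective_comp_eq_of_card_fiber_le {α β γ : Type*} [Fintype α] [Fintype β]
    [DecidableEq γ] {f : α → γ} {g : β → γ}
    (h : ∀ c, Fintype.card {a // f a = c} ≤ Fintype.card {b // g b = c}) :
    ∃ σ : α → β, Injective σ ∧ ∀ a, g (σ a) = f a := by
  have e := fun c => Classical.choice (Function.Embedding.nonempty_of_card_le (h c))
  let σ := (Equiv.sigmaFiberEquiv f).symm.toEmbedding.trans
    ((Embedding.sigmaMap (Embedding.refl γ) e).trans (Equiv.sigmaFiberEquiv g).toEmbedding)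
  exact ⟨σ, σ.injective, fun a => (e (f a) ⟨a, rfl⟩).2⟩

section Projection

variable {F : Type} [Field F] [Fintype F] [DecidableEq F] {n m : ℕ}
  {U : Submodule F (Fin n → F)} {V : Submodule F (Fin m → F)} (φ : U →ₗ[F] V)

theorem isProjection_of_injective {p : Fin m → Prop} [DecidablePred p] (σ : {i // p i} → Fin n)
    (hσ : Injective σ)
    (hφ : ∀ u i, ((φ u : V) : Fin m → F) i = if h : p i then (u : Fin n → F) (σ ⟨i, h⟩) else 0) :
    IsProjection φ := by
  refine ⟨Matrix.of fun i => if h : p i then Pi.single (σ ⟨i, h⟩) 1 else 0,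
    fun u => funext fun i => ?_, fun i j j' hj hj' => ?_, fun i i' j hi hi' => ?_⟩
  · rw [hφ]
    split_ifs with h <;> simp [Matrix.mulVec, h]
  · by_cases h : p i <;> simp_all [Pi.single_apply]
  · by_cases h : p i <;> by_cases h' : p i' <;> simp_all [Pi.single_apply]
    exact congrArg Subtype.val (hσ hi')

theorem isProjection_of_card_coordFun_comp_eq_le [DecidableEq (Module.Dual F U)]
    (h : ∀ g : Module.Dual F U, g ≠ 0 → #{i | coordFun V i ∘ₗ φ = g} ≤ #{j | coordFun U j = g}) :
    IsProjection φ := by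
  have hfiber (g : Module.Dual F U) :
      Fintype.card {i : {i // coordFun V i ∘ₗ φ ≠ 0} // coordFun V i ∘ₗ φ = g} ≤
        Fintype.card {j // coordFun U j = g} := by
    rcases eq_or_ne g 0 with rfl | hg
    · rw [Fintype.card_eq_zero_iff.mpr ⟨fun i => i.1.2 i.2⟩]
      exact Nat.zero_le _
    rw [Fintype.card_congr (Equiv.subtypeSubtypeEquivSubtype
        fun {i} (hi : coordFun V i ∘ₗ φ = g) => hi ▸ hg),
      Fintype.card_subtype, Fintype.card_subtype]
    exact h g hg
  obtain ⟨σ, hσ, hσφ⟩ := exists_injective_comp_eq_of_card_fiber_le hfiber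
  refine isProjection_of_injective φ σ hσ fun u i => ?_
  split_ifs with hi
  · exact (LinearMap.congr_fun (hσφ ⟨i, hi⟩) u).symm
  · exact LinearMap.congr_fun (not_not.mp hi) u

end Projection

theorem projectionForcing_two_two_two_three_five_five_five :
    ProjectionForcing 2 ({2,2,2,3,5,5,5} : Multiset ℤ) := by
  intro F _ _ _ hF n m U V φ hφ
  classical
  exact isProjection_of_card_coordFun_comp_eq_le φ fun _ hg =>
    card_coordFun_comp_eq_le_of_projWeightChanges_eq hF φ hφ hg

namespace V₃

def param : (Fin 3 → ZMod 2) →ₗ[ZMod 2] (Fin 7 → ZMod 2) :=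
  Fintype.linearCombination (ZMod 2) ![![1,1,0,0,0,0,0], ![1,0,1,0,0,0,0], ![0,0,0,1,1,1,0]]

theorem range_param : LinearMap.range param = V₃ := by
  rw [param, Fintype.range_linearCombination, V₃]
  rw [Matrix.range_cons, Matrix.range_cons, Matrix.range_cons, Matrix.range_empty,
    Set.union_empty, Set.singleton_union, Set.singleton_union]

theorem param_injective : Injective param := by
  unfold Injective
  decide

noncomputable def equivParam : (Fin 3 → ZMod 2) ≃ₗ[ZMod 2] V₃ :=
  (LinearEquiv.ofInjective param param_injective).trans (LinearEquiv.ofEq _ _ range_param)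

def lastCoord : V₃ →ₗ[ZMod 2] (⊤ : Submodule (ZMod 2) (Fin 1 → ZMod 2)) :=
  (LinearMap.pi fun _ => LinearMap.proj 6 ∘ₗ V₃.subtype).codRestrict ⊤ fun _ => trivial

theorem lastCoord_apply (v : V₃) :
    ((lastCoord v : (⊤ : Submodule (ZMod 2) (Fin 1 → ZMod 2))) : Fin 1 → ZMod 2) =
      ![(v : Fin 7 → ZMod 2) 6] := by
  ext i
  fin_cases i
  rfl

theorem projWeightChanges_lastCoord :
    projWeightChanges lastCoord = ({2,2,2,3,5,5,5} : Multiset ℤ) := by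
  classical
  let _ : Fintype V₃ := Fintype.ofFinite V₃
  have : (univ.erase 0 : Finset V₃) = (univ.erase 0).map equivParam.toEquiv.toEmbedding := by
    rw [map_erase, map_univ_equiv]
    simp
  have hwc (x : Fin 3 → ZMod 2) : weightChange lastCoord (equivParam x) =
      (hammingNorm (param x) : ℤ) - hammingNorm ![param x 6] := by
    rw [weightChange, lastCoord_apply]
    rfl
  rw [projWeightChanges_eq_map_weightChange (by simp), this, map_val, Multiset.map_map]
  simp only [Function.comp_def, Equiv.coe_toEmbedding, LinearEquiv.coe_toEquiv, hwc]
  decide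

theorem isProjection_lastCoord : IsProjection lastCoord :=
  isProjection_of_injective (p := fun _ => True) lastCoord (fun _ => 6)
    (fun _ _ _ => Subsingleton.elim _ _) fun v i => by
      rw [dif_pos trivial, lastCoord_apply]
      fin_cases i
      rfl

end V₃

theorem splitDiff_two_three : splitDiff 2 3 ({2,2,2,3,5,5,5} : Multiset ℤ) = -6 := by
  have hsort : ({2,2,2,3,5,5,5} : Multiset ℤ).sort (· ≤ ·) = [2,2,2,3,5,5,5] :=
    List.mergeSort_eq_self _ (by decide)
  rw [splitDiff, hsort]
  rfl

/-- `S = {2,2,2,3,5,5,5}` is 2-projection-forcing and is realized by a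
projection (projection onto the last coordinate of `V₃`), yet `δ₂(S) = -6 ≤ -2^(3-1)`:
the split-difference criterion is not necessary for being projection-forcing. -/
theorem stmt_16 :
    ProjectionForcing 2 ({2,2,2,3,5,5,5} : Multiset ℤ) ∧
    (∃ (W' : Submodule (ZMod 2) (Fin 1 → ZMod 2)) (φ : V₃ →ₗ[ZMod 2] W'),
      (∀ v : V₃, ((φ v : W') : Fin 1 → ZMod 2) = ![(v : Fin 7 → ZMod 2) 6]) ∧
      projWeightChanges φ = ({2,2,2,3,5,5,5} : Multiset ℤ) ∧
      IsProjection φ) ∧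
    splitDiff 2 3 ({2,2,2,3,5,5,5} : Multiset ℤ) = -6 ∧
    (-6 : ℤ) ≤ -2 ^ (3 - 1) := by
  exact ⟨projectionForcing_two_two_two_three_five_five_five,
    ⟨⊤, V₃.lastCoord, V₃.lastCoord_apply, V₃.projWeightChanges_lastCoord,
      V₃.isProjection_lastCoord⟩, splitDiff_two_three, by norm_num⟩
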